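/- arXiv:math/0501087 — 4 statements merged into one kernel-verified Lean document; each statement's English description precedes it below -/
import Mathlib

section
/- Let V be a countable index set, let H(x) be a complex Hilbert space for each x ∈ V, let H = ⊕_{x∈V} H(x) be their Hilbert space (ℓ²-) direct sum, and let P_x ∈ B(H) denote the orthogonal projection of H onto the summand H(x). Let Ed be a set of edges with source and range maps s, r : Ed → V. Suppose that for each edge e ∈ Ed there are two finite families of bounded operators {A_{e,i}}_{i∈Fin(n_e)} and {B_{e,i}}_{i∈Fin(n_e)} on H, each supported between the source and range summands (that is, A_{e,i} = P_{r(e)} A_{e,i} P_{s(e)} and B_{e,i} = P_{r(e)} B_{e,i} P_{s(e)} for all i), and that they represent the same completely positive map, i.e. ∑_{i} A_{e,i} ρ A_{e,i}* = ∑_{i} B_{e,i} ρ B_{e,i}* for every ρ ∈ B(H). Assume each H(x) is finite-dimensional. Then the C*-subalgebra of B(H) generated by {P_x : x ∈ V} ∪ {A_{e,i} : e ∈ Ed, i ∈ Fin(n_e)} is equal to the C*-subalgebra generated by {P_x : x ∈ V} ∪ {B_{e,i} : e ∈ Ed, i ∈ Fin(n_e)}. -/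
/-- The orthogonal projection of the Hilbert space direct sum `lp H 2` onto the
summand `H x`. -/
noncomputable def lpProj {V : Type*} [DecidableEq V] (H : V → Type*)
    [∀ x, NormedAddCommGroup (H x)] [∀ x, InnerProductSpace ℂ (H x)] (x : V) :
    lp H 2 →L[ℂ] lp H 2 :=
  LinearMap.mkContinuous
    { toFun := fun f => lp.single 2 x (f x)
      map_add' := fun f g => by
        apply lp.ext
        funext j
        by_cases h : j = x
        · subst h
          simp [lp.single_apply_self, lp.coeFn_add]
        · simp [lp.single_apply_ne 2 x _ h, lp.coeFn_add]
      map_smul' := fun c f => by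
        apply lp.ext
        funext j
        by_cases h : j = x
        · subst h
          simp [lp.single_apply_self, lp.coeFn_smul]
        · simp [lp.single_apply_ne 2 x _ h, lp.coeFn_smul] }
    1
    (fun f => by
      have h1 : ‖lp.single 2 x (f x)‖ = ‖f x‖ := lp.norm_single (by norm_num) x (f x)
      have h2 : ‖f x‖ ≤ ‖f‖ := lp.norm_apply_le_norm (by norm_num) f x
      simpa [h1] using h2)

/-!
Two Kraus families `(Aᵢ)`, `(Bᵢ)` of the same completely positive map span the same space of
operators: if a functional `f` vanishes on every `Aᵢ`, testing the map on rank-one operators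
shows that `∑ conj (f Bᵢ) • Bᵢ = 0`, and applying `f` gives `∑ |f Bᵢ|² = 0`. Hence each set of
generators lies in the linear span of the other, and the closed *-algebras coincide.
-/

open scoped InnerProductSpace ComplexConjugate

theorem NonUnitalStarAlgebra.adjoin_le_adjoin_of_subset_span {R A : Type*} [CommSemiring R]
    [StarRing R] [NonUnitalSemiring A] [StarRing A] [Module R A] [IsScalarTower R A A]
    [SMulCommClass R A A] [StarModule R A] {s t : Set A}
    (h : t ⊆ Submodule.span R s) : adjoin R t ≤ adjoin R s :=
  adjoin_le fun _ hx =>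
    Submodule.span_le (p := (adjoin R s).toNonUnitalSubalgebra.toSubmodule)
      |>.2 (subset_adjoin R s) (h hx)

namespace ContinuousLinearMap

variable {E : Type*} [NormedAddCommGroup E] [InnerProductSpace ℂ E] [CompleteSpace E]
  {ι : Type*} [Fintype ι]

/-- Evaluate both Kraus representations at the rank-one operator `|w⟩⟨η|`. -/
theorem sum_inner_smul_eq_of_kraus_eq {A B : ι → E →L[ℂ] E}
    (hrep : ∀ ρ : E →L[ℂ] E, ∑ i, A i * ρ * adjoint (A i) = ∑ i, B i * ρ * adjoint (B i))
    (η ζ : E) : ∑ i, ⟪A i η, ζ⟫_ℂ • A i = ∑ i, ⟪B i η, ζ⟫_ℂ • B i := by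
  ext w
  have h := congr($(hrep ((innerSL ℂ η).smulRight w)) ζ)
  simp only [sum_apply, mul_apply_eq_comp, smulRight_apply, innerSL_apply_apply,
    adjoint_inner_right, map_smul] at h
  simpa only [sum_apply, smul_apply] using h

theorem range_subset_span_range_of_kraus_eq {A B : ι → E →L[ℂ] E}
    (hrep : ∀ ρ : E →L[ℂ] E, ∑ i, A i * ρ * adjoint (A i) = ∑ i, B i * ρ * adjoint (B i)) :
    Set.range B ⊆ Submodule.span ℂ (Set.range A) := by
  rintro _ ⟨j, rfl⟩
  by_contra hj
  obtain ⟨f, hfj, hf⟩ := Submodule.exists_dual_map_eq_bot_of_notMem hj inferInstance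
  have hfA : ∀ i, f (A i) = 0 := fun i =>
    (Submodule.mem_bot ℂ).1 <| hf ▸ Submodule.mem_map_of_mem (Submodule.subset_span ⟨i, rfl⟩)
  have hT : ∑ i, conj (f (B i)) • B i = 0 := by
    ext η
    refine ext_inner_right ℂ fun ζ => ?_
    have h := congrArg f (sum_inner_smul_eq_of_kraus_eq hrep η ζ)
    simp only [map_sum, map_smul, hfA, smul_eq_mul, mul_zero, Finset.sum_const_zero] at h
    simp only [sum_apply, smul_apply, sum_inner, inner_smul_left, starRingEnd_self_apply,
      zero_apply, inner_zero_left]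
    simpa only [mul_comm] using h.symm
  have hnormSq : ∑ i, (Complex.normSq (f (B i)) : ℂ) = 0 := by
    simpa only [map_sum, map_smul, map_zero, smul_eq_mul, Complex.normSq_eq_conj_mul_self]
      using congrArg f hT
  have hsum : ∑ i, Complex.normSq (f (B i)) = 0 := by exact_mod_cast hnormSq
  exact hfj <| Complex.normSq_eq_zero.1 <|
    (Finset.sum_eq_zero_iff_of_nonneg fun i _ => Complex.normSq_nonneg _).1 hsum j
      (Finset.mem_univ j)

theorem closure_adjoin_kraus_le {κ : Type*} {n : κ → ℕ}
    {A B : ∀ e, Fin (n e) → E →L[ℂ] E}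
    (hrep : ∀ e (ρ : E →L[ℂ] E),
      ∑ i, A e i * ρ * adjoint (A e i) = ∑ i, B e i * ρ * adjoint (B e i))
    (P : Set (E →L[ℂ] E)) :
    (NonUnitalStarAlgebra.adjoin ℂ (P ∪ {T | ∃ e i, T = B e i})).topologicalClosure ≤
      (NonUnitalStarAlgebra.adjoin ℂ (P ∪ {T | ∃ e i, T = A e i})).topologicalClosure := by
  refine NonUnitalStarSubalgebra.topologicalClosure_mono <|
    NonUnitalStarAlgebra.adjoin_le_adjoin_of_subset_span ?_
  rintro _ (hP | ⟨e, i, rfl⟩)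
  · exact Submodule.subset_span (Or.inl hP)
  · refine Submodule.span_mono ?_ (range_subset_span_range_of_kraus_eq (hrep e) ⟨i, rfl⟩)
    rintro _ ⟨k, rfl⟩
    exact Or.inr ⟨e, k, rfl⟩

end ContinuousLinearMap

theorem cstar_algebra_independent_of_kraus_choice_general
    {V : Type*} [DecidableEq V]
    (H : V → Type*) [∀ x, NormedAddCommGroup (H x)] [∀ x, InnerProductSpace ℂ (H x)]
    [∀ x, FiniteDimensional ℂ (H x)]
    {Ed : Type*} (n : Ed → ℕ)
    (A B : ∀ e : Ed, Fin (n e) → (lp H 2 →L[ℂ] lp H 2))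
    (hrep : ∀ e (ρ : lp H 2 →L[ℂ] lp H 2),
      ∑ i, A e i * ρ * ContinuousLinearMap.adjoint (A e i) =
        ∑ i, B e i * ρ * ContinuousLinearMap.adjoint (B e i)) :
    (NonUnitalStarAlgebra.adjoin ℂ
        (Set.range (lpProj H) ∪ {T | ∃ e i, T = A e i})).topologicalClosure =
      (NonUnitalStarAlgebra.adjoin ℂ
        (Set.range (lpProj H) ∪ {T | ∃ e i, T = B e i})).topologicalClosure :=
  le_antisymm (ContinuousLinearMap.closure_adjoin_kraus_le (fun e ρ => (hrep e ρ).symm) _)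
    (ContinuousLinearMap.closure_adjoin_kraus_le hrep _)

/-- The C*-algebra generated by the vertex projections together with a
choice of Kraus operators for the CP maps attached to the edges does not depend on the
choice of Kraus representations. -/
theorem cstar_algebra_independent_of_kraus_choice
    {V : Type*} [Countable V] [DecidableEq V]
    (H : V → Type*) [∀ x, NormedAddCommGroup (H x)] [∀ x, InnerProductSpace ℂ (H x)]
    [∀ x, FiniteDimensional ℂ (H x)]
    {Ed : Type*} (s r : Ed → V) (n : Ed → ℕ)
    (A B : ∀ e : Ed, Fin (n e) → (lp H 2 →L[ℂ] lp H 2))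
    (hA : ∀ e i, A e i = lpProj H (r e) * A e i * lpProj H (s e))
    (hB : ∀ e i, B e i = lpProj H (r e) * B e i * lpProj H (s e))
    (hrep : ∀ e (ρ : lp H 2 →L[ℂ] lp H 2),
      ∑ i, A e i * ρ * ContinuousLinearMap.adjoint (A e i) =
        ∑ i, B e i * ρ * ContinuousLinearMap.adjoint (B e i)) :
    (NonUnitalStarAlgebra.adjoin ℂ
        (Set.range (lpProj H) ∪ {T | ∃ e i, T = A e i})).topologicalClosure =
      (NonUnitalStarAlgebra.adjoin ℂ
        (Set.range (lpProj H) ∪ {T | ∃ e i, T = B e i})).topologicalClosure :=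
  cstar_algebra_independent_of_kraus_choice_general H n A B hrep
end

section
/- Let H₁ and H₂ be finite-dimensional complex Hilbert spaces, let n be a natural number, and let {A_i}_{i∈Fin(n)} and {B_i}_{i∈Fin(n)} be families of linear maps from H₁ to H₂ such that ∑_{i} A_i ρ A_i* = ∑_{i} B_i ρ B_i* for every linear operator ρ on H₁. Then there exists a unitary n × n complex matrix u = (u_{ij}) such that A_i = ∑_{j} u_{ij} B_j for every i. -/
open scoped ComplexConjugate
open Module Finset

noncomputable section KrausAux

set_option linter.unusedSectionVars false
set_option maxHeartbeats 1000000

variable {K : Type*} [NormedAddCommGroup K] [InnerProductSpace ℂ K] [FiniteDimensional ℂ K]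

local notation "⟪" x ", " y "⟫" => @inner ℂ _ _ x y

private def vecsMap (n : ℕ) (a : Fin n → K) : EuclideanSpace ℂ (Fin n) →ₗ[ℂ] K where
  toFun c := ∑ i, c i • a i
  map_add' x y := by simp [add_smul, Finset.sum_add_distrib]
  map_smul' c x := by simp [smul_smul, Finset.smul_sum]

private lemma vecsMap_apply (n : ℕ) (a : Fin n → K) (c : EuclideanSpace ℂ (Fin n)) :
    vecsMap n a c = ∑ i, c i • a i := rfl

private lemma vecsMap_single (n : ℕ) (a : Fin n → K) (i : Fin n) :
    vecsMap n a (EuclideanSpace.single i 1) = a i := by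
  rw [vecsMap_apply, Finset.sum_eq_single i]
  · simp
  · intro j _ hj; simp [EuclideanSpace.single_apply, hj]
  · simp

private lemma vecsMap_adjoint_apply (n : ℕ) (a : Fin n → K) (x : K) (i : Fin n) :
    LinearMap.adjoint (vecsMap n a) x i = ⟪a i, x⟫ := by
  have : LinearMap.adjoint (vecsMap n a) x i
      = ⟪(EuclideanSpace.single i (1:ℂ)), LinearMap.adjoint (vecsMap n a) x⟫ := by
    simp [EuclideanSpace.inner_single_left]
  rw [this, LinearMap.adjoint_inner_right, vecsMap_single]

private theorem exists_unitary_of_frames (n : ℕ) (a b : Fin n → K)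
    (hab : ∀ x : K, ∑ i, ⟪a i, x⟫ • a i = ∑ i, ⟪b i, x⟫ • b i) :
    ∃ u : Matrix (Fin n) (Fin n) ℂ, u ∈ Matrix.unitaryGroup (Fin n) ℂ ∧
      ∀ i, a i = ∑ j, u i j • b j := by
  classical
  set M : EuclideanSpace ℂ (Fin n) →ₗ[ℂ] K := vecsMap n a with hM
  set N : EuclideanSpace ℂ (Fin n) →ₗ[ℂ] K := vecsMap n b with hN
  set M' := LinearMap.adjoint M with hM'
  set N' := LinearMap.adjoint N with hN'
  have hMM : ∀ x : K, M (M' x) = N (N' x) := by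
    intro x
    rw [vecsMap_apply, vecsMap_apply]
    simp only [hM', hN', hM, hN, vecsMap_adjoint_apply]
    exact hab x
  have hinner : ∀ x y : K, ⟪M' x, M' y⟫ = ⟪N' x, N' y⟫ := by
    intro x y
    rw [hM', LinearMap.adjoint_inner_left, hN', LinearMap.adjoint_inner_left,
      ← hM', ← hN', hMM]
  have hnorm : ∀ x : K, ‖M' x‖ = ‖N' x‖ := by
    intro x
    have := hinner x x
    rw [inner_self_eq_norm_sq_to_K, inner_self_eq_norm_sq_to_K] at this
    have h2 : (‖M' x‖ : ℝ)^2 = (‖N' x‖:ℝ)^2 := by exact_mod_cast this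
    nlinarith [norm_nonneg (M' x), norm_nonneg (N' x)]
  -- kernel inclusion
  have hker : LinearMap.ker N' ≤ LinearMap.ker M' := by
    intro x hx
    rw [LinearMap.mem_ker] at hx ⊢
    have : ‖M' x‖ = 0 := by rw [hnorm, hx, norm_zero]
    exact norm_eq_zero.mp this
  -- the partial isometry on the range of N'
  set V := LinearMap.range N' with hV
  set φ : V →ₗ[ℂ] EuclideanSpace ℂ (Fin n) :=
    (Submodule.liftQ (LinearMap.ker N') M' hker) ∘ₗ
      (N'.quotKerEquivRange.symm.toLinearMap) with hφ
  have hφ_apply : ∀ (x : K) (hx : N' x ∈ V), φ ⟨N' x, hx⟩ = M' x := by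
    intro x hx
    have h1 : N'.quotKerEquivRange.symm ⟨N' x, hx⟩
        = Submodule.Quotient.mk x := by
      rw [N'.quotKerEquivRange_symm_apply_image x ⟨x, rfl⟩, Submodule.mkQ_apply]
    simp only [hφ, LinearMap.comp_apply, LinearEquiv.coe_toLinearMap]
    rw [h1, Submodule.liftQ_apply]
  have hφ_norm : ∀ v : V, ‖φ v‖ = ‖v‖ := by
    rintro ⟨v, hv⟩
    obtain ⟨x, rfl⟩ := hv
    rw [hφ_apply x ⟨x, rfl⟩]
    rw [hnorm]
    rfl
  set Lφ : V →ₗᵢ[ℂ] EuclideanSpace ℂ (Fin n) := ⟨φ, hφ_norm⟩ with hLφ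
  set w : EuclideanSpace ℂ (Fin n) →ₗᵢ[ℂ] EuclideanSpace ℂ (Fin n) := Lφ.extend with hw
  have hwN : ∀ x : K, w (N' x) = M' x := by
    intro x
    have := Lφ.extend_apply ⟨N' x, ⟨x, rfl⟩⟩
    rw [← hw] at this
    rw [show ((⟨N' x, ⟨x, rfl⟩⟩ : V) : EuclideanSpace ℂ (Fin n)) = N' x from rfl] at this
    rw [this, hLφ]
    exact hφ_apply x ⟨x, rfl⟩
  -- upgrade w to an equiv
  set we : EuclideanSpace ℂ (Fin n) ≃ₗᵢ[ℂ] EuclideanSpace ℂ (Fin n) := w.toLinearIsometryEquiv rfl with hwe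
  have hwe_apply : ∀ x : EuclideanSpace ℂ (Fin n), we x = w x := fun x => rfl
  -- M = N ∘ adjoint w
  have hMNw : ∀ c : EuclideanSpace ℂ (Fin n), M c = N (LinearMap.adjoint w.toLinearMap c) := by
    intro c
    have hcomp : w.toLinearMap ∘ₗ N' = M' := LinearMap.ext fun x => hwN x
    have := congrArg LinearMap.adjoint hcomp
    rw [LinearMap.adjoint_comp, hM', hN', LinearMap.adjoint_adjoint,
      LinearMap.adjoint_adjoint] at this
    rw [← this]
    rfl
  -- the unitary matrix
  set u : Matrix (Fin n) (Fin n) ℂ :=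
    fun i j => LinearMap.adjoint w.toLinearMap (EuclideanSpace.single i 1) j with hu
  have hu_eq : ∀ i j, u i j
      = ⟪w (EuclideanSpace.single j 1), (EuclideanSpace.single i 1 : EuclideanSpace ℂ (Fin n))⟫ := by
    intro i j
    have : LinearMap.adjoint w.toLinearMap (EuclideanSpace.single i 1) j
        = ⟪(EuclideanSpace.single j (1:ℂ)),
            LinearMap.adjoint w.toLinearMap (EuclideanSpace.single i 1)⟫ := by
      simp [EuclideanSpace.inner_single_left]
    rw [hu]
    dsimp only
    rw [this, LinearMap.adjoint_inner_right]
    rfl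
  refine ⟨u, ?_, ?_⟩
  · rw [Matrix.mem_unitaryGroup_iff]
    ext i j
    rw [Matrix.mul_apply, Matrix.one_apply]
    have : ∀ k, u i k * (star u) k j
        = ⟪(EuclideanSpace.single j (1:ℂ) : EuclideanSpace ℂ (Fin n)),
            we (EuclideanSpace.single k 1)⟫
          * ⟪we (EuclideanSpace.single k 1),
              (EuclideanSpace.single i (1:ℂ) : EuclideanSpace ℂ (Fin n))⟫ := by
      intro k
      rw [Matrix.star_apply, hu_eq, hu_eq, RCLike.star_def, inner_conj_symm,
        mul_comm]
      rfl
    rw [Finset.sum_congr rfl (fun k _ => this k)]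
    set bas : OrthonormalBasis (Fin n) ℂ (EuclideanSpace ℂ (Fin n)) :=
      (EuclideanSpace.basisFun (Fin n) ℂ).map we with hbas
    have hb : ∀ k, we (EuclideanSpace.single k 1) = bas k := by
      intro k
      rw [hbas, OrthonormalBasis.map_apply, EuclideanSpace.basisFun_apply]
    rw [Finset.sum_congr rfl (fun k _ => by rw [hb k])]
    rw [bas.sum_inner_mul_inner]
    simp [EuclideanSpace.inner_single_left, EuclideanSpace.single_apply, eq_comm]
  · intro i
    have h1 : a i = M (EuclideanSpace.single i 1) := (vecsMap_single n a i).symm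
    rw [h1, hMNw, vecsMap_apply]

end KrausAux

noncomputable section KrausAux2

set_option linter.unusedSectionVars false
set_option maxHeartbeats 1000000

local notation "⟪" x ", " y "⟫" => @inner ℂ _ _ x y

variable {H₁ H₂ : Type*} [NormedAddCommGroup H₁] [InnerProductSpace ℂ H₁]
    [NormedAddCommGroup H₂] [InnerProductSpace ℂ H₂]
    [FiniteDimensional ℂ H₁] [FiniteDimensional ℂ H₂]

private def vecLM {ι₁ ι₂ : Type*} [Fintype ι₁] [Fintype ι₂]
    (b₁ : OrthonormalBasis ι₁ ℂ H₁) (b₂ : OrthonormalBasis ι₂ ℂ H₂) :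
    (H₁ →ₗ[ℂ] H₂) →ₗ[ℂ] EuclideanSpace ℂ (ι₂ × ι₁) where
  toFun A := WithLp.toLp 2 (fun p => ⟪b₂ p.1, A (b₁ p.2)⟫)
  map_add' x y := by ext p; simp [inner_add_right]
  map_smul' c x := by ext p; simp [inner_smul_right]

private lemma vecLM_apply {ι₁ ι₂ : Type*} [Fintype ι₁] [Fintype ι₂]
    (b₁ : OrthonormalBasis ι₁ ℂ H₁) (b₂ : OrthonormalBasis ι₂ ℂ H₂)
    (A : H₁ →ₗ[ℂ] H₂) (p : ι₂ × ι₁) :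
    vecLM b₁ b₂ A p = ⟪b₂ p.1, A (b₁ p.2)⟫ := rfl

private lemma vecLM_inner {ι₁ ι₂ : Type*} [Fintype ι₁] [Fintype ι₂]
    (b₁ : OrthonormalBasis ι₁ ℂ H₁) (b₂ : OrthonormalBasis ι₂ ℂ H₂)
    (A C : H₁ →ₗ[ℂ] H₂) :
    ⟪vecLM b₁ b₂ A, vecLM b₁ b₂ C⟫ = ∑ k, ⟪A (b₁ k), C (b₁ k)⟫ := by
  rw [PiLp.inner_apply]
  rw [Fintype.sum_prod_type]
  rw [Finset.sum_comm]
  refine Finset.sum_congr rfl fun k _ => ?_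
  have : ∀ l, ⟪vecLM b₁ b₂ A (l, k), vecLM b₁ b₂ C (l, k)⟫
      = ⟪A (b₁ k), b₂ l⟫ * ⟪b₂ l, C (b₁ k)⟫ := by
    intro l
    rw [RCLike.inner_apply, vecLM_apply, vecLM_apply, inner_conj_symm, mul_comm]
  rw [Finset.sum_congr rfl fun l _ => this l]
  exact b₂.sum_inner_mul_inner _ _

private lemma vecLM_injective {ι₁ ι₂ : Type*} [Fintype ι₁] [Fintype ι₂]
    (b₁ : OrthonormalBasis ι₁ ℂ H₁) (b₂ : OrthonormalBasis ι₂ ℂ H₂) :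
    Function.Injective (vecLM b₁ b₂) := by
  rw [injective_iff_map_eq_zero]
  intro A hA
  refine b₁.toBasis.ext fun k => ?_
  simp only [LinearMap.zero_apply, OrthonormalBasis.coe_toBasis]
  apply ext_inner_left ℂ
  intro v
  rw [inner_zero_right]
  have hv : v = ∑ l, ⟪b₂ l, v⟫ • b₂ l := by
    have := b₂.sum_repr' v
    simpa using this.symm
  rw [hv]
  rw [sum_inner]
  refine Finset.sum_eq_zero fun l _ => ?_
  rw [inner_smul_left]
  have := congrArg (fun v => v (l, k)) hA
  rw [vecLM_apply] at this
  have h0 : ⟪b₂ l, A (b₁ k)⟫ = 0 := by rw [this]; rfl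
  rw [h0, mul_zero]

private lemma vecLM_surjective {ι₁ ι₂ : Type*} [Fintype ι₁] [Fintype ι₂]
    (b₁ : OrthonormalBasis ι₁ ℂ H₁) (b₂ : OrthonormalBasis ι₂ ℂ H₂) :
    Function.Surjective (vecLM b₁ b₂) := by
  have hdim : finrank ℂ (H₁ →ₗ[ℂ] H₂) = finrank ℂ (EuclideanSpace ℂ (ι₂ × ι₁)) := by
    rw [Module.finrank_linearMap, finrank_euclideanSpace, Fintype.card_prod,
      Module.finrank_eq_card_basis b₁.toBasis, Module.finrank_eq_card_basis b₂.toBasis,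
      mul_comm]
  exact (LinearMap.injective_iff_surjective_of_finrank_eq_finrank hdim).mp
    (vecLM_injective b₁ b₂)

end KrausAux2

section KrausMain

open Module Finset

local notation "⟪" x ", " y "⟫" => @inner ℂ _ _ x y

set_option maxHeartbeats 1000000 in
/-- Two Kraus representations of the same completely positive map between
finite-dimensional Hilbert spaces, with the same number of operators, are related by a
scalar unitary matrix. -/
theorem kraus_representations_related_by_unitary
    {H₁ H₂ : Type*} [NormedAddCommGroup H₁] [InnerProductSpace ℂ H₁]
    [NormedAddCommGroup H₂] [InnerProductSpace ℂ H₂]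
    [FiniteDimensional ℂ H₁] [FiniteDimensional ℂ H₂]
    (n : ℕ) (A B : Fin n → (H₁ →ₗ[ℂ] H₂))
    (h : ∀ ρ : H₁ →ₗ[ℂ] H₁,
      ∑ i, A i ∘ₗ ρ ∘ₗ LinearMap.adjoint (A i) =
        ∑ i, B i ∘ₗ ρ ∘ₗ LinearMap.adjoint (B i)) :
    ∃ u : Matrix (Fin n) (Fin n) ℂ, u ∈ Matrix.unitaryGroup (Fin n) ℂ ∧
      ∀ i, A i = ∑ j, u i j • B j := by
  classical
  set b₁ := stdOrthonormalBasis ℂ H₁ with hb₁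
  set b₂ := stdOrthonormalBasis ℂ H₂ with hb₂
  set vec := vecLM b₁ b₂ with hvec
  -- pointwise key identity
  have hk : ∀ (k : Fin (finrank ℂ H₁)) (x : H₁) (T : H₁ →ₗ[ℂ] H₂) (z : H₂),
      (T ∘ₗ (LinearMap.smulRight ((innerSL ℂ (b₁ k)).toLinearMap) x) ∘ₗ
        LinearMap.adjoint T) z = ⟪T (b₁ k), z⟫ • T x := by
    intro k x T z
    simp only [LinearMap.comp_apply, LinearMap.smulRight_apply,
      ContinuousLinearMap.coe_coe, innerSL_apply_apply, map_smul]
    rw [LinearMap.adjoint_inner_right]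
  have key : ∀ (C : H₁ →ₗ[ℂ] H₂) (x : H₁),
      ∑ i, ⟪vec (A i), vec C⟫ • (A i) x = ∑ i, ⟪vec (B i), vec C⟫ • (B i) x := by
    intro C x
    have h2 : ∀ k : Fin (finrank ℂ H₁), ∑ i, ⟪A i (b₁ k), C (b₁ k)⟫ • (A i) x
        = ∑ i, ⟪B i (b₁ k), C (b₁ k)⟫ • (B i) x := by
      intro k
      have hρ := LinearMap.congr_fun
        (h (LinearMap.smulRight ((innerSL ℂ (b₁ k)).toLinearMap) x)) (C (b₁ k))
      simp only [LinearMap.sum_apply] at hρ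
      have e1 : ∑ i, ⟪A i (b₁ k), C (b₁ k)⟫ • (A i) x
          = ∑ i, (A i ∘ₗ (LinearMap.smulRight ((innerSL ℂ (b₁ k)).toLinearMap) x) ∘ₗ
              LinearMap.adjoint (A i)) (C (b₁ k)) :=
        Finset.sum_congr rfl fun i _ => (hk k x (A i) (C (b₁ k))).symm
      have e2 : ∑ i, ⟪B i (b₁ k), C (b₁ k)⟫ • (B i) x
          = ∑ i, (B i ∘ₗ (LinearMap.smulRight ((innerSL ℂ (b₁ k)).toLinearMap) x) ∘ₗ
              LinearMap.adjoint (B i)) (C (b₁ k)) :=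
        Finset.sum_congr rfl fun i _ => (hk k x (B i) (C (b₁ k))).symm
      rw [e1, e2]
      exact hρ
    have swapA : ∑ i, ⟪vec (A i), vec C⟫ • (A i) x
        = ∑ k, ∑ i, ⟪A i (b₁ k), C (b₁ k)⟫ • (A i) x := by
      rw [Finset.sum_comm]
      refine Finset.sum_congr rfl fun i _ => ?_
      rw [hvec, vecLM_inner, Finset.sum_smul]
    have swapB : ∑ i, ⟪vec (B i), vec C⟫ • (B i) x
        = ∑ k, ∑ i, ⟪B i (b₁ k), C (b₁ k)⟫ • (B i) x := by
      rw [Finset.sum_comm]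
      refine Finset.sum_congr rfl fun i _ => ?_
      rw [hvec, vecLM_inner, Finset.sum_smul]
    rw [swapA, swapB]
    exact Finset.sum_congr rfl fun k _ => h2 k
  -- frame hypothesis in Euclidean space
  have hab : ∀ x : EuclideanSpace ℂ (Fin (finrank ℂ H₂) × Fin (finrank ℂ H₁)),
      ∑ i, ⟪vec (A i), x⟫ • vec (A i) = ∑ i, ⟪vec (B i), x⟫ • vec (B i) := by
    intro x
    obtain ⟨C, rfl⟩ := vecLM_surjective b₁ b₂ x
    have hL : ∑ i, ⟪vec (A i), vec C⟫ • A i = ∑ i, ⟪vec (B i), vec C⟫ • B i :=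
      LinearMap.ext fun y => by
        simpa only [LinearMap.sum_apply, LinearMap.smul_apply] using key C y
    calc ∑ i, ⟪vec (A i), vec C⟫ • vec (A i)
        = vec (∑ i, ⟪vec (A i), vec C⟫ • A i) := by
          rw [map_sum]; exact Finset.sum_congr rfl fun i _ => (map_smul _ _ _).symm
      _ = vec (∑ i, ⟪vec (B i), vec C⟫ • B i) := by rw [hL]
      _ = ∑ i, ⟪vec (B i), vec C⟫ • vec (B i) := by
          rw [map_sum]; exact Finset.sum_congr rfl fun i _ => (map_smul _ _ _)
  obtain ⟨u, hu1, hu2⟩ := exists_unitary_of_frames _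
    (fun i => vec (A i)) (fun i => vec (B i)) hab
  refine ⟨u, hu1, fun i => ?_⟩
  apply vecLM_injective b₁ b₂
  rw [map_sum]
  have : ∀ j, vecLM b₁ b₂ (u i j • B j) = u i j • vec (B j) := fun j => map_smul _ _ _
  rw [Finset.sum_congr rfl fun j _ => this j]
  exact hu2 i

end KrausMain
end

section
/- Let V be a countable index set, let H(x) be a finite-dimensional complex Hilbert space for each x ∈ V, let H = ⊕_{x∈V} H(x) be their Hilbert space (ℓ²-) direct sum, and let P_x ∈ B(H) denote the orthogonal projection onto the summand H(x). Let {A_k}_{k∈K} be a countable family of bounded operators on H such that each A_k satisfies A_k = P_{y_k} A_k P_{x_k} for some vertices x_k, y_k ∈ V, and let 𝔄 be the C*-subalgebra of B(H) generated by {P_x : x ∈ V} ∪ {A_k : k ∈ K}. Then for every finite subset F ⊆ 𝔄 and every ε > 0, there exists a finite-dimensional *-subalgebra B of B(H) with B ⊆ 𝔄 such that for every a ∈ F there exists b ∈ B with ‖a − b‖ < ε. -/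
/-!
Every generator is compressed by a finite-rank orthogonal projection: `P_x` by itself and
`A_k = P_{y_k} A_k P_{x_k}` by the projection onto `H(x_k) ⊕ H(y_k)`. Since the corners `p B(H) p`
increase with `p`, the operators lying in the corner of some finite-rank projection form a
*-subalgebra, which therefore contains the *-algebra generated algebraically by the generators.
Approximating the finitely many elements of `F` from that dense subalgebra, all approximants lie
in one corner `p B(H) p` with `p` of finite rank; this corner is finite-dimensional, and its
intersection with the algebraic *-algebra is the required `B`.
-/

namespace IsStarProjection

variable {R A : Type*} [CommSemiring R] [NonUnitalSemiring A] [StarRing A] [Module R A]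
  [IsScalarTower R A A] [SMulCommClass R A A] {p q a : A}

lemma mul_eq_of_mul_mul_eq (hp : IsStarProjection p) (ha : p * a * p = a) : p * a = a := by
  rw [← ha, ← mul_assoc, ← mul_assoc, hp.isIdempotentElem.eq]

lemma mul_eq_of_mul_mul_eq' (hp : IsStarProjection p) (ha : p * a * p = a) : a * p = a := by
  rw [← ha, mul_assoc, hp.isIdempotentElem.eq]

variable (R) in
def corner (hp : IsStarProjection p) : NonUnitalStarSubalgebra R A where
  carrier := {a | p * a * p = a}
  zero_mem' := by simp only [Set.mem_ofPred_eq, mul_zero, zero_mul]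
  add_mem' {a b} ha hb := by simp_all only [Set.mem_ofPred_eq, mul_add, add_mul]
  mul_mem' {a b} ha hb := by
    simp only [Set.mem_ofPred_eq] at ha hb ⊢
    rw [← mul_assoc, hp.mul_eq_of_mul_mul_eq ha, mul_assoc, hp.mul_eq_of_mul_mul_eq' hb]
  smul_mem' c a ha := by
    simp only [Set.mem_ofPred_eq] at ha ⊢
    rw [mul_smul_comm, smul_mul_assoc, ha]
  star_mem' {a} ha := by
    simp only [Set.mem_ofPred_eq] at ha ⊢
    conv_rhs => rw [← ha]
    rw [star_mul, star_mul, hp.isSelfAdjoint.star_eq, mul_assoc]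

lemma mem_corner {hp : IsStarProjection p} : a ∈ hp.corner R ↔ p * a * p = a := Iff.rfl

lemma corner_mono (hp : IsStarProjection p) (hq : IsStarProjection q) (hpq : p * q = p) :
    hp.corner R ≤ hq.corner R := by
  have hqp : q * p = p := by
    simpa only [star_mul, hp.isSelfAdjoint.star_eq, hq.isSelfAdjoint.star_eq] using
      congrArg star hpq
  intro a ha
  rw [mem_corner] at ha ⊢
  calc q * a * q = q * (p * a * p) * q := by rw [ha]
    _ = (q * p) * a * (p * q) := by simp only [mul_assoc]
    _ = a := by rw [hqp, hpq, ha]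

end IsStarProjection

namespace Submodule

variable {𝕜 E : Type*} [RCLike 𝕜] [NormedAddCommGroup E] [InnerProductSpace 𝕜 E] [CompleteSpace E]

noncomputable def corner (W : Submodule 𝕜 E) [W.HasOrthogonalProjection] :
    NonUnitalStarSubalgebra 𝕜 (E →L[𝕜] E) :=
  (isStarProjection_starProjection (U := W)).corner 𝕜

variable {U W : Submodule 𝕜 E} [U.HasOrthogonalProjection] [W.HasOrthogonalProjection]

lemma mem_corner {T : E →L[𝕜] E} :
    T ∈ W.corner ↔ W.starProjection * T * W.starProjection = T := Iff.rfl

lemma corner_mono (h : U ≤ W) : U.corner ≤ W.corner :=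
  IsStarProjection.corner_mono _ _ (starProjection_comp_starProjection_of_le h)

lemma mem_corner_of_range_le {T : E →L[𝕜] E} (h : T.range ≤ W) (h' : (star T).range ≤ W) :
    T ∈ W.corner := by
  have starProjection_mul_of_range_le {S : E →L[𝕜] E} (h : S.range ≤ W) :
      W.starProjection * S = S :=
    ContinuousLinearMap.ext fun v => starProjection_eq_self_iff.mpr (h ⟨v, rfl⟩)
  have hright : T * W.starProjection = T := by
    simpa only [star_mul, star_star, (isSelfAdjoint_starProjection W).star_eq] using
      congrArg star (starProjection_mul_of_range_le h')
  rw [mem_corner, mul_assoc, hright, starProjection_mul_of_range_le h]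

lemma finiteDimensional_of_le_corner [FiniteDimensional 𝕜 W]
    {B : NonUnitalStarSubalgebra 𝕜 (E →L[𝕜] E)} (hB : B ≤ W.corner) : FiniteDimensional 𝕜 B := by
  let compress : (W →L[𝕜] W) →ₗ[𝕜] (E →L[𝕜] E) :=
    { toFun S := W.subtypeL ∘L S ∘L W.orthogonalProjectionOnto
      map_add' S S' := by ext; simp
      map_smul' c S := by ext; simp }
  have hle : B.toNonUnitalSubalgebra.toSubmodule ≤ LinearMap.range compress := fun T hT =>
    ⟨W.orthogonalProjectionOnto ∘L T ∘L W.subtypeL, Eq.trans rfl (hB hT)⟩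
  exact Submodule.finiteDimensional_of_le hle

end Submodule

section FiniteCorners

variable (𝕜 E : Type*) [RCLike 𝕜] [NormedAddCommGroup E] [InnerProductSpace 𝕜 E] [CompleteSpace E]

noncomputable def finiteCorners : NonUnitalStarSubalgebra 𝕜 (E →L[𝕜] E) where
  carrier := {T | ∃ (W : Submodule 𝕜 E) (_ : FiniteDimensional 𝕜 W), T ∈ W.corner}
  zero_mem' := ⟨⊥, inferInstance, zero_mem _⟩
  add_mem' := by
    rintro T S ⟨U, _, hT⟩ ⟨W, _, hS⟩
    exact ⟨U ⊔ W, inferInstance, add_mem (Submodule.corner_mono le_sup_left hT)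
      (Submodule.corner_mono le_sup_right hS)⟩
  mul_mem' := by
    rintro T S ⟨U, _, hT⟩ ⟨W, _, hS⟩
    exact ⟨U ⊔ W, inferInstance, mul_mem (Submodule.corner_mono le_sup_left hT)
      (Submodule.corner_mono le_sup_right hS)⟩
  smul_mem' := by
    rintro c T ⟨W, _, hT⟩
    exact ⟨W, inferInstance, SMulMemClass.smul_mem c hT⟩
  star_mem' := by
    rintro T ⟨W, _, hT⟩
    exact ⟨W, inferInstance, star_mem hT⟩

variable {𝕜 E}

lemma exists_finiteDimensional_subset_corner (s : Finset (E →L[𝕜] E))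
    (hs : (s : Set (E →L[𝕜] E)) ⊆ finiteCorners 𝕜 E) :
    ∃ (W : Submodule 𝕜 E) (_ : FiniteDimensional 𝕜 W), (s : Set (E →L[𝕜] E)) ⊆ W.corner := by
  classical
  induction s using Finset.induction_on with
  | empty => exact ⟨⊥, inferInstance, by simp⟩
  | insert T s _ ih =>
    rw [Finset.coe_insert, Set.insert_subset_iff] at hs
    obtain ⟨U, _, hT⟩ := hs.1
    obtain ⟨W, _, hW⟩ := ih hs.2
    refine ⟨U ⊔ W, inferInstance, ?_⟩
    rw [Finset.coe_insert, Set.insert_subset_iff]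
    exact ⟨Submodule.corner_mono le_sup_left hT, hW.trans (Submodule.corner_mono le_sup_right)⟩

lemma mem_finiteCorners_of_eq_mul_mul {P Q T : E →L[𝕜] E} (hP : IsSelfAdjoint P)
    (hQ : IsSelfAdjoint Q) [FiniteDimensional 𝕜 P.range] [FiniteDimensional 𝕜 Q.range]
    (hT : T = P * T * Q) : T ∈ finiteCorners 𝕜 E := by
  have hT' : star T = Q * star T * P := by
    conv_lhs => rw [hT]
    rw [star_mul, star_mul, hP.star_eq, hQ.star_eq, mul_assoc]
  refine ⟨P.range ⊔ Q.range, inferInstance, Submodule.mem_corner_of_range_le ?_ ?_⟩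
  · rw [hT, mul_assoc]
    exact (LinearMap.range_comp_le_range _ _).trans le_sup_left
  · rw [hT', mul_assoc]
    exact (LinearMap.range_comp_le_range _ _).trans le_sup_right

end FiniteCorners

section lp

variable {V : Type*} [DecidableEq V] (H : V → Type*)
  [∀ x, NormedAddCommGroup (H x)] [∀ x, InnerProductSpace ℂ (H x)]

lemma lpProj_apply (x : V) (f : lp H 2) : lpProj H x f = lp.single 2 x (f x) := rfl

lemma isSelfAdjoint_lpProj [∀ x, CompleteSpace (H x)] (x : V) : IsSelfAdjoint (lpProj H x) :=
  LinearMap.IsSymmetric.isSelfAdjoint fun f g => by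
    simp only [ContinuousLinearMap.coe_coe, lpProj_apply, lp.inner_single_left,
      lp.inner_single_right]

lemma lpProj_mul_self (x : V) : lpProj H x * lpProj H x = lpProj H x := by
  ext f : 1
  exact congrArg (lp.single 2 x) (lp.single_apply_self 2 x (f x))

instance finiteDimensional_range_lpProj [∀ x, FiniteDimensional ℂ (H x)] (x : V) :
    FiniteDimensional ℂ (lpProj H x).range :=
  Submodule.finiteDimensional_of_le (S₂ := (lp.singleContinuousLinearMap ℂ H 2 x).range)
    fun _ ⟨f, hf⟩ => ⟨f x, hf⟩

end lp

theorem qch_algebra_local_finite_dimensional_approximation_general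
    {V : Type*} [DecidableEq V]
    (H : V → Type*) [∀ x, NormedAddCommGroup (H x)] [∀ x, InnerProductSpace ℂ (H x)]
    [∀ x, FiniteDimensional ℂ (H x)]
    {K : Type*}
    (A : K → (lp H 2 →L[ℂ] lp H 2)) (x y : K → V)
    (hA : ∀ k, A k = lpProj H (y k) * A k * lpProj H (x k))
    (𝔄 : NonUnitalStarSubalgebra ℂ (lp H 2 →L[ℂ] lp H 2))
    (h𝔄 : 𝔄 = (NonUnitalStarAlgebra.adjoin ℂ
        (Set.range (lpProj H) ∪ Set.range A)).topologicalClosure)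
    (F : Finset (lp H 2 →L[ℂ] lp H 2)) (hF : (F : Set (lp H 2 →L[ℂ] lp H 2)) ⊆ 𝔄)
    (ε : ℝ) (hε : 0 < ε) :
    ∃ B : NonUnitalStarSubalgebra ℂ (lp H 2 →L[ℂ] lp H 2),
      FiniteDimensional ℂ B ∧
      (B : Set (lp H 2 →L[ℂ] lp H 2)) ⊆ 𝔄 ∧
      ∀ a ∈ F, ∃ b ∈ B, ‖a - b‖ < ε := by
  classical
  set 𝔄₀ := NonUnitalStarAlgebra.adjoin ℂ (Set.range (lpProj H) ∪ Set.range A)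
  have h𝔄₀ : 𝔄₀ ≤ finiteCorners ℂ (lp H 2) := by
    refine NonUnitalStarAlgebra.adjoin_le ?_
    rintro _ (⟨v, rfl⟩ | ⟨k, rfl⟩)
    · exact mem_finiteCorners_of_eq_mul_mul (isSelfAdjoint_lpProj H v) (isSelfAdjoint_lpProj H v)
        (by rw [lpProj_mul_self, lpProj_mul_self])
    · exact mem_finiteCorners_of_eq_mul_mul (isSelfAdjoint_lpProj H _)
        (isSelfAdjoint_lpProj H _) (hA k)
  have happrox (a : lp H 2 →L[ℂ] lp H 2) (ha : a ∈ F) : ∃ b ∈ 𝔄₀, ‖a - b‖ < ε := by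
    have ha' : a ∈ closure (𝔄₀ : Set (lp H 2 →L[ℂ] lp H 2)) := by
      rw [h𝔄] at hF
      exact hF ha
    obtain ⟨b, hb, hab⟩ := Metric.mem_closure_iff.mp ha' ε hε
    exact ⟨b, hb, by rwa [← dist_eq_norm]⟩
  choose! b hb hab using happrox
  obtain ⟨W, _, hW⟩ := exists_finiteDimensional_subset_corner (F.image b) <| by
    rw [Finset.coe_image, Set.image_subset_iff]
    exact fun a ha => h𝔄₀ (hb a ha)
  refine ⟨W.corner ⊓ 𝔄₀, Submodule.finiteDimensional_of_le_corner inf_le_left, ?_,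
    fun a ha => ⟨b a, ⟨hW (Finset.mem_image_of_mem b ha), hb a ha⟩, hab a ha⟩⟩
  rw [h𝔄]
  exact inf_le_right.trans (NonUnitalStarSubalgebra.le_topologicalClosure _)

/-- In the C*-algebra of a quantum causal history (generated by the vertex
projections and edge Kraus operators, each supported between two finite-dimensional vertex
summands), every finite subset can be approximated to any accuracy by elements of a
finite-dimensional *-subalgebra contained in the algebra. -/
theorem qch_algebra_local_finite_dimensional_approximation
    {V : Type*} [Countable V] [DecidableEq V]
    (H : V → Type*) [∀ x, NormedAddCommGroup (H x)] [∀ x, InnerProductSpace ℂ (H x)]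
    [∀ x, FiniteDimensional ℂ (H x)]
    {K : Type*} [Countable K]
    (A : K → (lp H 2 →L[ℂ] lp H 2)) (x y : K → V)
    (hA : ∀ k, A k = lpProj H (y k) * A k * lpProj H (x k))
    (𝔄 : NonUnitalStarSubalgebra ℂ (lp H 2 →L[ℂ] lp H 2))
    (h𝔄 : 𝔄 = (NonUnitalStarAlgebra.adjoin ℂ
        (Set.range (lpProj H) ∪ Set.range A)).topologicalClosure)
    (F : Finset (lp H 2 →L[ℂ] lp H 2)) (hF : (F : Set (lp H 2 →L[ℂ] lp H 2)) ⊆ 𝔄)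
    (ε : ℝ) (hε : 0 < ε) :
    ∃ B : NonUnitalStarSubalgebra ℂ (lp H 2 →L[ℂ] lp H 2),
      FiniteDimensional ℂ B ∧
      (B : Set (lp H 2 →L[ℂ] lp H 2)) ⊆ 𝔄 ∧
      ∀ a ∈ F, ∃ b ∈ B, ‖a - b‖ < ε :=
  qch_algebra_local_finite_dimensional_approximation_general H A x y hA 𝔄 h𝔄 F hF ε hε
end

section
/- Let H be a finite-dimensional complex Hilbert space, let n be a natural number, and let {A_i}_{i∈Fin(n)} and {B_i}_{i∈Fin(n)} be families of linear operators on H such that ∑_{i} A_i ρ A_i* = ∑_{i} B_i ρ B_i* for every linear operator ρ on H. Then the C*-subalgebra of B(H) generated by {A_i : i ∈ Fin(n)} equals the C*-subalgebra of B(H) generated by {B_i : i ∈ Fin(n)}. -/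
open scoped ComplexConjugate InnerProductSpace
open Finset

lemma kraus_sum_core {n d : ℕ} (a c : Fin n → Fin d → Fin d → ℂ)
    (hEnt : ∀ m k p l, ∑ i, a i m k * conj (a i p l) = ∑ i, c i m k * conj (c i p l))
    (x : Fin d × Fin d → ℂ)
    (hx : ∀ i, ∑ p : Fin d × Fin d, conj (x p) * a i p.1 p.2 = 0) :
    ∀ j, ∑ p : Fin d × Fin d, conj (x p) * c j p.1 p.2 = 0 := by
  have key : ∀ e : Fin n → Fin d → Fin d → ℂ,
      ∑ i, (∑ p : Fin d × Fin d, conj (x p) * e i p.1 p.2) *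
        conj (∑ q : Fin d × Fin d, conj (x q) * e i q.1 q.2)
      = ∑ p : Fin d × Fin d, ∑ q : Fin d × Fin d,
          conj (x p) * x q * ∑ i, e i p.1 p.2 * conj (e i q.1 q.2) := by
    intro e
    have h1 : ∀ i, (∑ p : Fin d × Fin d, conj (x p) * e i p.1 p.2) *
        conj (∑ q : Fin d × Fin d, conj (x q) * e i q.1 q.2)
        = ∑ p : Fin d × Fin d, ∑ q : Fin d × Fin d,
            conj (x p) * x q * (e i p.1 p.2 * conj (e i q.1 q.2)) := by
      intro i
      rw [map_sum, Finset.sum_mul_sum]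
      refine Finset.sum_congr rfl fun p _ => Finset.sum_congr rfl fun q _ => ?_
      simp only [map_mul, RingHomCompTriple.comp_apply, RingHom.id_apply, Complex.conj_conj]
      ring
    simp_rw [h1, Finset.mul_sum]
    rw [Finset.sum_comm]
    refine Finset.sum_congr rfl fun p _ => ?_
    rw [Finset.sum_comm]
  have hzero : ∑ j, (∑ p : Fin d × Fin d, conj (x p) * c j p.1 p.2) *
      conj (∑ q : Fin d × Fin d, conj (x q) * c j q.1 q.2) = 0 := by
    rw [key c]
    have he : ∀ p q : Fin d × Fin d,
        (∑ i, c i p.1 p.2 * conj (c i q.1 q.2)) = ∑ i, a i p.1 p.2 * conj (a i q.1 q.2) :=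
      fun p q => (hEnt p.1 p.2 q.1 q.2).symm
    simp_rw [he]
    rw [← key a]
    simp [hx]
  intro j
  have hns : ∑ j, Complex.normSq (∑ p : Fin d × Fin d, conj (x p) * c j p.1 p.2) = 0 := by
    simp_rw [Complex.mul_conj] at hzero
    exact_mod_cast hzero
  have hj := (Finset.sum_eq_zero_iff_of_nonneg (fun j _ => Complex.normSq_nonneg _)).mp hns j
    (Finset.mem_univ j)
  exact Complex.normSq_eq_zero.mp hj

lemma kraus_mem_span {H : Type*} [NormedAddCommGroup H] [InnerProductSpace ℂ H]
    [FiniteDimensional ℂ H] (n : ℕ) (A B : Fin n → (H →L[ℂ] H))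
    (h : ∀ ρ : H →L[ℂ] H,
      ∑ i, A i * ρ * ContinuousLinearMap.adjoint (A i) =
        ∑ i, B i * ρ * ContinuousLinearMap.adjoint (B i)) :
    ∀ j, B j ∈ Submodule.span ℂ (Set.range A) := by
  set d := Module.finrank ℂ H with hd
  let b : OrthonormalBasis (Fin d) ℂ H := stdOrthonormalBasis ℂ H
  -- entrywise identity
  have hEnt : ∀ m k p l : Fin d,
      ∑ i, ⟪b m, A i (b k)⟫_ℂ * conj ⟪b p, A i (b l)⟫_ℂ =
        ∑ i, ⟪b m, B i (b k)⟫_ℂ * conj ⟪b p, B i (b l)⟫_ℂ := by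
    intro m k p l
    set ρ : H →L[ℂ] H := (innerSL ℂ (b l)).smulRight (b k) with hρ
    have hterm : ∀ T : H →L[ℂ] H,
        ⟪b m, (T * ρ * ContinuousLinearMap.adjoint T) (b p)⟫_ℂ
          = ⟪b m, T (b k)⟫_ℂ * conj ⟪b p, T (b l)⟫_ℂ := by
      intro T
      have h1 : (T * ρ * ContinuousLinearMap.adjoint T) (b p)
          = ⟪b l, ContinuousLinearMap.adjoint T (b p)⟫_ℂ • T (b k) := by
        simp [hρ, ContinuousLinearMap.mul_apply]
      rw [h1, inner_smul_right]
      have h2 : ⟪b l, ContinuousLinearMap.adjoint T (b p)⟫_ℂ = conj ⟪b p, T (b l)⟫_ℂ := by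
        rw [ContinuousLinearMap.adjoint_inner_right]
        exact (inner_conj_symm _ _).symm
      rw [h2]; ring
    have hA : ∑ i, ⟪b m, A i (b k)⟫_ℂ * conj ⟪b p, A i (b l)⟫_ℂ
        = ⟪b m, (∑ i, A i * ρ * ContinuousLinearMap.adjoint (A i)) (b p)⟫_ℂ := by
      rw [ContinuousLinearMap.sum_apply, inner_sum]
      exact Finset.sum_congr rfl fun i _ => (hterm (A i)).symm
    have hB : ∑ i, ⟪b m, B i (b k)⟫_ℂ * conj ⟪b p, B i (b l)⟫_ℂ
        = ⟪b m, (∑ i, B i * ρ * ContinuousLinearMap.adjoint (B i)) (b p)⟫_ℂ := by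
      rw [ContinuousLinearMap.sum_apply, inner_sum]
      exact Finset.sum_congr rfl fun i _ => (hterm (B i)).symm
    rw [hA, hB, h ρ]
  -- encode operators as Euclidean vectors
  let E : (H →L[ℂ] H) →ₗ[ℂ] EuclideanSpace ℂ (Fin d × Fin d) :=
    { toFun := fun T => WithLp.toLp 2 (fun p : Fin d × Fin d => ⟪b p.1, T (b p.2)⟫_ℂ)
      map_add' := by intro T S; ext p; simp [inner_add_right]
      map_smul' := by intro c T; ext p; simp [inner_smul_right] }
  have hinj : Function.Injective E := by
    rw [← LinearMap.ker_eq_bot, LinearMap.ker_eq_bot']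
    intro T hT
    have hTe : ∀ p : Fin d × Fin d, ⟪b p.1, T (b p.2)⟫_ℂ = 0 := fun p => by simpa [E] using congrArg (fun v => v p) hT
    have hTb : ∀ k, T (b k) = 0 := by
      intro k
      have : b.repr (T (b k)) = 0 := by
        ext m
        simpa [b.repr_apply_apply] using hTe (m, k)
      simpa using (map_eq_zero_iff b.repr (b.repr.injective)).mp this
    apply ContinuousLinearMap.coe_injective
    exact Module.Basis.ext b.toBasis (by simpa using hTb)
  intro j
  set K := Submodule.span ℂ (Set.range fun i => E (A i)) with hK
  have hmem : E (B j) ∈ Kᗮᗮ := by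
    rw [Submodule.mem_orthogonal]
    intro u hu
    have hx : ∀ i, ∑ p : Fin d × Fin d, conj (u p) * ⟪b p.1, A i (b p.2)⟫_ℂ = 0 := by
      intro i
      have := (Submodule.mem_orthogonal' K u).mp hu (E (A i))
        (Submodule.subset_span ⟨i, rfl⟩)
      simpa [PiLp.inner_apply, RCLike.inner_apply, E, mul_comm] using this
    have := kraus_sum_core (fun i m k => ⟪b m, A i (b k)⟫_ℂ) (fun i m k => ⟪b m, B i (b k)⟫_ℂ)
      hEnt u hx j
    simpa [PiLp.inner_apply, RCLike.inner_apply, E, mul_comm] using this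
  rw [Submodule.orthogonal_orthogonal] at hmem
  rw [hK] at hmem
  have hrange : (Set.range fun i => E (A i)) = E '' Set.range A := by
    rw [← Set.range_comp]; rfl
  rw [hrange, ← Submodule.map_span] at hmem
  obtain ⟨T, hT, hET⟩ := hmem
  rwa [← hinj hET]

/-- Two same-length Kraus families representing the same completely
positive map on a finite-dimensional Hilbert space generate the same C*-subalgebra of
`B(H)`. -/
theorem cstar_generated_eq_of_same_cp_map
    {H : Type*} [NormedAddCommGroup H] [InnerProductSpace ℂ H] [FiniteDimensional ℂ H]
    (n : ℕ) (A B : Fin n → (H →L[ℂ] H))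
    (h : ∀ ρ : H →L[ℂ] H,
      ∑ i, A i * ρ * ContinuousLinearMap.adjoint (A i) =
        ∑ i, B i * ρ * ContinuousLinearMap.adjoint (B i)) :
    (NonUnitalStarAlgebra.adjoin ℂ (Set.range A)).topologicalClosure =
      (NonUnitalStarAlgebra.adjoin ℂ (Set.range B)).topologicalClosure := by
  have hBA := kraus_mem_span n A B h
  have hAB := kraus_mem_span n B A (fun ρ => (h ρ).symm)
  have key : ∀ (C D : Fin n → (H →L[ℂ] H)),
      (∀ j, D j ∈ Submodule.span ℂ (Set.range C)) →
      NonUnitalStarAlgebra.adjoin ℂ (Set.range D) ≤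
        NonUnitalStarAlgebra.adjoin ℂ (Set.range C) := by
    intro C D hD
    apply NonUnitalStarAlgebra.adjoin_le
    rintro x ⟨j, rfl⟩
    have hspan : Submodule.span ℂ (Set.range C) ≤
        (NonUnitalStarAlgebra.adjoin ℂ (Set.range C)).toNonUnitalSubalgebra.toSubmodule :=
      Submodule.span_le.2 (NonUnitalStarAlgebra.subset_adjoin ℂ _)
    exact hspan (hD j)
  have : NonUnitalStarAlgebra.adjoin ℂ (Set.range A) =
      NonUnitalStarAlgebra.adjoin ℂ (Set.range B) :=
    le_antisymm (key B A hAB) (key A B hBA)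
  rw [this]
end
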